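/- For every n ≥ 1, the pair of n×n matrices X₀ = Σ_{k=1}^{n−1} E_{k+1,k} and Y₀ = Σ_{k=1}^{n−1} (k−n) E_{k,k+1} satisfies rank([X₀, Y₀] + I_n) = 1, i.e. (X₀, Y₀) defines a point of the Calogero–Moser space C_n. -/

import Mathlib

open Matrix

private lemma sum_indicator_fin {n : ℕ} (f : Fin n → ℂ) (m : ℕ)
    (P : Fin n → Prop) [DecidablePred P] (hP : ∀ k, P k ↔ (k : ℕ) = m) :
    ∑ k : Fin n, (if P k then f k else 0) =
      if h : m < n then f ⟨m, h⟩ else 0 := by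
  split_ifs with h
  · rw [Finset.sum_eq_single ⟨m, h⟩]
    · simp [hP]
    · intro k _ hk
      rw [if_neg]
      rw [hP]
      intro hkm
      exact hk (Fin.ext hkm)
    · simp
  · apply Finset.sum_eq_zero
    intro k _
    rw [if_neg]
    rw [hP]
    intro hkm
    exact h (hkm ▸ k.isLt)

private lemma rank_stdBasisMatrix_ne_zero {n : ℕ} (a : Fin n) {c : ℂ} (hc : c ≠ 0) :
    (Matrix.single a a c).rank = 1 := by
  rw [Matrix.rank]
  have hrange : LinearMap.range (Matrix.single a a c).mulVecLin =
      Submodule.span ℂ {Function.update (0 : Fin n → ℂ) a 1} := by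
    apply le_antisymm
    · rintro x ⟨v, rfl⟩
      rw [Matrix.mulVecLin_apply, Matrix.single_mulVec]
      have : Function.update (0 : Fin n → ℂ) a (c * v a) =
          (c * v a) • Function.update (0 : Fin n → ℂ) a 1 := by
        ext i
        by_cases h : i = a <;> simp [h, Function.update_apply]
      rw [this]
      exact Submodule.smul_mem _ _ (Submodule.mem_span_singleton_self _)
    · rw [Submodule.span_le, Set.singleton_subset_iff]
      refine ⟨Function.update (0 : Fin n → ℂ) a c⁻¹, ?_⟩
      rw [Matrix.mulVecLin_apply, Matrix.single_mulVec]
      simp [mul_inv_cancel₀ hc]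
  rw [hrange, finrank_span_singleton]
  intro h
  have := congrFun h a
  simp at this

/-- the pair `X₀ = Σ_{k=1}^{n-1} E_{k+1,k}`,
`Y₀ = Σ_{k=1}^{n-1} (k-n) E_{k,k+1}` satisfies `rank([X₀,Y₀] + Iₙ) = 1`,
hence defines a point of the Calogero–Moser space `Cₙ`. -/
theorem basepoint_in_calogero_moser (n : ℕ) (hn : 1 ≤ n) :
    (Matrix.of (fun i j : Fin n =>
        if (i : ℕ) = (j : ℕ) + 1 then (1 : ℂ) else 0) *
      Matrix.of (fun i j : Fin n =>
        if (j : ℕ) = (i : ℕ) + 1 then (((i : ℕ) + 1 : ℂ) - n) else 0) -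
     Matrix.of (fun i j : Fin n =>
        if (j : ℕ) = (i : ℕ) + 1 then (((i : ℕ) + 1 : ℂ) - n) else 0) *
      Matrix.of (fun i j : Fin n =>
        if (i : ℕ) = (j : ℕ) + 1 then (1 : ℂ) else 0) +
     (1 : Matrix (Fin n) (Fin n) ℂ)).rank = 1 := by
  have key : (Matrix.of (fun i j : Fin n =>
        if (i : ℕ) = (j : ℕ) + 1 then (1 : ℂ) else 0) *
      Matrix.of (fun i j : Fin n =>
        if (j : ℕ) = (i : ℕ) + 1 then (((i : ℕ) + 1 : ℂ) - n) else 0) -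
     Matrix.of (fun i j : Fin n =>
        if (j : ℕ) = (i : ℕ) + 1 then (((i : ℕ) + 1 : ℂ) - n) else 0) *
      Matrix.of (fun i j : Fin n =>
        if (i : ℕ) = (j : ℕ) + 1 then (1 : ℂ) else 0) +
     (1 : Matrix (Fin n) (Fin n) ℂ)) =
      Matrix.single (⟨0, hn⟩ : Fin n) ⟨0, hn⟩ (n : ℂ) := by
    ext i j
    simp only [Matrix.add_apply, Matrix.sub_apply, Matrix.mul_apply, Matrix.of_apply,
      Matrix.one_apply, Matrix.single, Matrix.of_apply]
    have hS1 : ∑ k : Fin n, (if (i : ℕ) = (k : ℕ) + 1 then (1 : ℂ) else 0) *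
        (if (j : ℕ) = (k : ℕ) + 1 then (((k : ℕ) + 1 : ℂ) - n) else 0) =
        if (i : ℕ) = (j : ℕ) ∧ 1 ≤ (i : ℕ) then ((i : ℕ) : ℂ) - n else 0 := by
      have hcomb : ∀ k : Fin n, (if (i : ℕ) = (k : ℕ) + 1 then (1 : ℂ) else 0) *
          (if (j : ℕ) = (k : ℕ) + 1 then (((k : ℕ) + 1 : ℂ) - n) else 0) =
          if (i : ℕ) = (k : ℕ) + 1 ∧ (j : ℕ) = (k : ℕ) + 1
            then (((k : ℕ) + 1 : ℂ) - n) else 0 := by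
        intro k
        by_cases h1 : (i : ℕ) = (k : ℕ) + 1 <;> by_cases h2 : (j : ℕ) = (k : ℕ) + 1 <;>
          simp [h1, h2]
      rw [Finset.sum_congr rfl (fun k _ => hcomb k)]
      by_cases hij : (i : ℕ) = (j : ℕ) ∧ 1 ≤ (i : ℕ)
      · obtain ⟨hij1, hij2⟩ := hij
        rw [sum_indicator_fin _ ((i : ℕ) - 1) _ (fun k => by omega), dif_pos (by omega)]
        simp only [Fin.val_mk]
        split_ifs with h1 h2 <;> try (exfalso; omega)
        rw [Nat.cast_sub hij2]
        push_cast
        ring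
      · rw [Finset.sum_eq_zero, if_neg hij]
        intro k _
        rw [if_neg]
        rintro ⟨hk1, hk2⟩
        exact hij ⟨by omega, by omega⟩
    have hS2 : ∑ k : Fin n, (if (k : ℕ) = (i : ℕ) + 1 then (((i : ℕ) + 1 : ℂ) - n) else 0) *
        (if (k : ℕ) = (j : ℕ) + 1 then (1 : ℂ) else 0) =
        if (i : ℕ) = (j : ℕ) ∧ (i : ℕ) + 1 < n then (((i : ℕ) + 1 : ℂ) - n) else 0 := by
      have hcomb : ∀ k : Fin n, (if (k : ℕ) = (i : ℕ) + 1 then (((i : ℕ) + 1 : ℂ) - n) else 0) *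
          (if (k : ℕ) = (j : ℕ) + 1 then (1 : ℂ) else 0) =
          if (k : ℕ) = (i : ℕ) + 1 ∧ (k : ℕ) = (j : ℕ) + 1
            then (((i : ℕ) + 1 : ℂ) - n) else 0 := by
        intro k
        by_cases h1 : (k : ℕ) = (i : ℕ) + 1 <;> by_cases h2 : (k : ℕ) = (j : ℕ) + 1 <;>
          simp [h1, h2]
      rw [Finset.sum_congr rfl (fun k _ => hcomb k)]
      by_cases hij : (i : ℕ) = (j : ℕ)
      · rw [sum_indicator_fin _ ((i : ℕ) + 1) _ (fun k => by omega)]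
        by_cases hlt : (i : ℕ) + 1 < n
        · rw [dif_pos hlt]
          try simp only [Fin.val_mk]
          split_ifs with h1 h2 <;> try (exfalso; omega)
          rfl
        · rw [dif_neg hlt, if_neg (by tauto)]
      · rw [Finset.sum_eq_zero, if_neg (by tauto)]
        intro k _
        rw [if_neg]
        rintro ⟨hk1, hk2⟩
        exact hij (by omega)
    rw [hS1, hS2]
    simp only [Fin.ext_iff, Fin.val_mk]
    split_ifs with h1 h2 h3 h4 <;>
      first
        | (exfalso; omega)
        | ring1
        | (have hc : ((i : ℕ) : ℂ) + 1 = (n : ℂ) := by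
             exact_mod_cast (by omega : (i : ℕ) + 1 = n)
           linear_combination hc)
        | (have hc : ((i : ℕ) : ℂ) = 0 := by
             exact_mod_cast (by omega : (i : ℕ) = 0)
           linear_combination -hc)
        | (have hc : (n : ℂ) = 1 := by
             exact_mod_cast (by omega : n = 1)
           linear_combination -hc)
  rw [key]
  exact rank_stdBasisMatrix_ne_zero _ (Nat.cast_ne_zero.mpr (by omega))
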